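/- Suppose f : ℝ^d → ℝ is L_f-smooth, h : ℝ^d → ℝ is L_h-smooth, g : ℝ^d → ℝ ∪ {+∞} is proper, lower semicontinuous and ρ-weakly convex. Let γ ∈ (0, min{1/ρ, 1/L_f}), λ > 0, α ∈ (0,1). Fix x ∈ ℝ^d, let y be the unique minimizer over y of g(y) + (1/(2γ))‖y − (x − γ∇(f+h)(x))‖², let t be the unique minimizer over u of f(u) + (1/(2γ))‖u − ((1 − λ)x + γ∇f(x) + λy)‖², and set x⁺ := (1 − α)x + αt. Then ⟨∇h(x) − ∇h(x⁺), y − x⁺⟩ ≥ −(L_h/(λα)) ( |1 − λα| + L_f γ ) ‖x − x⁺‖². -/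

import Mathlib

open scoped RealInnerProductSpace

/-- `g` is `ρ`-weakly convex: `g + (ρ/2)‖·‖²` is convex (extended-real-valued version). -/
def WeaklyConvexE {E : Type*} [NormedAddCommGroup E] [InnerProductSpace ℝ E]
    (ρ : ℝ) (g : E → EReal) : Prop :=
  ∀ x y : E, ∀ t : ℝ, 0 ≤ t → t ≤ 1 →
    g (t • x + (1 - t) • y) + (((ρ / 2) * ‖t • x + (1 - t) • y‖ ^ 2 : ℝ) : EReal) ≤
      (t : EReal) * (g x + (((ρ / 2) * ‖x‖ ^ 2 : ℝ) : EReal)) +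
        ((1 - t : ℝ) : EReal) * (g y + (((ρ / 2) * ‖y‖ ^ 2 : ℝ) : EReal))

/-!
The optimality condition `t = w - γ ∇f(t)` of the proximal step of `f` at `w` turns the update into the
identity `λ (y - x⁺) = (1 - λα)(t - x) + γ (∇f(t) - ∇f(x))`. Lipschitz continuity of
`∇f` bounds its norm by `(|1 - λα| + L_f γ) ‖t - x‖`, and `‖x - x⁺‖ = α ‖t - x‖`; Cauchy–Schwarz
together with Lipschitz continuity of `∇h` then gives the estimate.
-/

section

variable {E : Type*} [NormedAddCommGroup E] [InnerProductSpace ℝ E]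

theorem neg_mul_le_inner_of_norm_le {a b : E} {A B : ℝ} (ha : ‖a‖ ≤ A) (hb : ‖b‖ ≤ B) :
    -(A * B) ≤ ⟪a, b⟫ := by
  have hAB : ‖a‖ * ‖b‖ ≤ A * B :=
    mul_le_mul ha hb (norm_nonneg b) ((norm_nonneg a).trans ha)
  linarith [neg_le_of_abs_le (abs_real_inner_le_norm a b)]

variable [CompleteSpace E]

def IsProxPoint (f : E → ℝ) (γ : ℝ) (w t : E) : Prop :=
  ∀ u : E, f t + 1 / (2 * γ) * ‖t - w‖ ^ 2 ≤ f u + 1 / (2 * γ) * ‖u - w‖ ^ 2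

theorem IsProxPoint.smul_gradient_eq {f : E → ℝ} {γ : ℝ} {w t : E} (ht : IsProxPoint f γ w t)
    (hγ : γ ≠ 0) (hf : DifferentiableAt ℝ f t) : γ • gradient f t = w - t := by
  have hderiv : HasFDerivAt (fun u => f u + 1 / (2 * γ) * ‖u - w‖ ^ 2)
      (InnerProductSpace.toDual ℝ E (gradient f t) +
        (1 / (2 * γ)) • (2 • (innerSL ℝ (t - w)).comp (ContinuousLinearMap.id ℝ E))) t :=
    hf.hasGradientAt.hasFDerivAt.add (((hasFDerivAt_id t).sub_const w).norm_sq.const_mul _)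
  have hzero := IsLocalMin.hasFDerivAt_eq_zero (Filter.Eventually.of_forall fun u => ht u) hderiv
  -- Testing the vanishing derivative against the optimality residual itself gives `‖v‖² / γ = 0`.
  set v : E := γ • gradient f t - (w - t)
  have hv : γ⁻¹ * ⟪v, v⟫ = 0 := by
    have hzero_v := congrArg (fun L => L v) hzero
    simp only [_root_.add_apply, _root_.smul_apply,
      ContinuousLinearMap.comp_apply, InnerProductSpace.toDual_apply_apply, innerSL_apply_apply,
      ContinuousLinearMap.id_apply, _root_.zero_apply, smul_eq_mul, nsmul_eq_mul] at hzero_v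
    rw [← hzero_v]
    simp only [v, inner_sub_left, inner_smul_left, RCLike.conj_to_real]
    field_simp
    ring
  simpa [hγ, sub_eq_zero, v] using hv

end

theorem q2_estimate_general
    {E : Type*} [NormedAddCommGroup E] [InnerProductSpace ℝ E] [FiniteDimensional ℝ E]
    (f h : E → ℝ) (Lf Lh : ℝ)
    (hfd : Differentiable ℝ f)
    (hflip : ∀ x y : E, ‖gradient f x - gradient f y‖ ≤ Lf * ‖x - y‖)
    (hhlip : ∀ x y : E, ‖gradient h x - gradient h y‖ ≤ Lh * ‖x - y‖)
    (γ lam α : ℝ) (hγ0 : 0 < γ)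
    (hlam : 0 < lam) (hα0 : 0 < α)
    (x y t : E)
    (ht : ∀ u : E,
      f t + 1 / (2 * γ) *
        ‖t - ((1 - lam) • x + γ • gradient f x + lam • y)‖ ^ 2 ≤
      f u + 1 / (2 * γ) *
        ‖u - ((1 - lam) • x + γ • gradient f x + lam • y)‖ ^ 2)
    (xp : E) (hxp : xp = (1 - α) • x + α • t) :
    ⟪gradient h x - gradient h xp, y - xp⟫ ≥
      -(Lh / (lam * α)) * (|1 - lam * α| + Lf * γ) * ‖x - xp‖ ^ 2 := by
  have hopt : γ • gradient f t = (1 - lam) • x + γ • gradient f x + lam • y - t :=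
    IsProxPoint.smul_gradient_eq ht hγ0.ne' (hfd t)
  have hstep : lam • (y - xp) = (1 - lam * α) • (t - x) + γ • (gradient f t - gradient f x) := by
    rw [hxp]
    linear_combination (norm := module) (-1 : ℝ) • hopt
  have hx_xp : ‖x - xp‖ = α * ‖t - x‖ := by
    rw [show x - xp = α • (x - t) by rw [hxp]; module, norm_smul, Real.norm_of_nonneg hα0.le,
      norm_sub_rev]
  have hy_xp : lam * ‖y - xp‖ ≤ (|1 - lam * α| + Lf * γ) * ‖t - x‖ :=
    calc lam * ‖y - xp‖ = ‖(1 - lam * α) • (t - x) + γ • (gradient f t - gradient f x)‖ := by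
          rw [← hstep, norm_smul, Real.norm_of_nonneg hlam.le]
      _ ≤ |1 - lam * α| * ‖t - x‖ + γ * (Lf * ‖t - x‖) := by
          refine (norm_add_le _ _).trans (add_le_add ?_ ?_)
          · rw [norm_smul, Real.norm_eq_abs]
          · rw [norm_smul, Real.norm_of_nonneg hγ0.le]
            exact mul_le_mul_of_nonneg_left (hflip t x) hγ0.le
      _ = (|1 - lam * α| + Lf * γ) * ‖t - x‖ := by ring
  rw [ge_iff_le]
  calc -(Lh / (lam * α)) * (|1 - lam * α| + Lf * γ) * ‖x - xp‖ ^ 2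
      = -((Lh * ‖x - xp‖) * ((|1 - lam * α| + Lf * γ) * ‖t - x‖ / lam)) := by
        rw [hx_xp]; field_simp
    _ ≤ ⟪gradient h x - gradient h xp, y - xp⟫ :=
        neg_mul_le_inner_of_norm_le (hhlip x xp) (by rwa [le_div_iff₀' hlam])

theorem q2_estimate
    {E : Type*} [NormedAddCommGroup E] [InnerProductSpace ℝ E] [FiniteDimensional ℝ E]
    (f h : E → ℝ) (g : E → EReal) (Lf Lh ρ : ℝ)
    (hLf : 0 ≤ Lf) (hLh : 0 ≤ Lh) (hρ : 0 ≤ ρ)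
    (hfd : Differentiable ℝ f)
    (hflip : ∀ x y : E, ‖gradient f x - gradient f y‖ ≤ Lf * ‖x - y‖)
    (hhd : Differentiable ℝ h)
    (hhlip : ∀ x y : E, ‖gradient h x - gradient h y‖ ≤ Lh * ‖x - y‖)
    (hgtop : ∃ x, g x ≠ ⊤) (hgbot : ∀ x, g x ≠ ⊥)
    (hglsc : LowerSemicontinuous g)
    (hwc : WeaklyConvexE ρ g)
    (γ lam α : ℝ) (hγ0 : 0 < γ) (hγρ : γ * ρ < 1) (hγf : γ * Lf < 1)
    (hlam : 0 < lam) (hα0 : 0 < α) (hα1 : α < 1)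
    (x y t : E)
    (hy : ∀ w : E,
      g y + ((1 / (2 * γ) *
        ‖y - (x - γ • gradient (fun v => f v + h v) x)‖ ^ 2 : ℝ) : EReal) ≤
      g w + ((1 / (2 * γ) *
        ‖w - (x - γ • gradient (fun v => f v + h v) x)‖ ^ 2 : ℝ) : EReal))
    (ht : ∀ u : E,
      f t + 1 / (2 * γ) *
        ‖t - ((1 - lam) • x + γ • gradient f x + lam • y)‖ ^ 2 ≤
      f u + 1 / (2 * γ) *
        ‖u - ((1 - lam) • x + γ • gradient f x + lam • y)‖ ^ 2)
    (xp : E) (hxp : xp = (1 - α) • x + α • t) :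
    ⟪gradient h x - gradient h xp, y - xp⟫ ≥
      -(Lh / (lam * α)) * (|1 - lam * α| + Lf * γ) * ‖x - xp‖ ^ 2 :=
  q2_estimate_general f h Lf Lh hfd hflip hhlip γ lam α hγ0 hlam hα0 x y t ht xp hxp
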